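/- arXiv:1810.13036 — 2 statements merged into one kernel-verified Lean document; each statement's English description precedes it below -/
import Mathlib

section
/- Let a₁,…,aₙ be positive integers and k, B positive integers with a₁ + ⋯ + aₙ = kB. Let G be the graph obtained from the disjoint union of the flowers F₀ = F(B, k+1) and F_j = F(a_j, k+1) for j ∈ {1,…,n}, with universal vertices y₀, y₁, …, yₙ respectively, by adding the edges y₀y_j for every j ∈ {1,…,n}. Then G admits an equitable (k+1)-coloring if and only if there is a function σ : {1,…,n} → {1,…,k} such that for every i ∈ {1,…,k}, the sum of a_j over all j with σ(j) = i equals B. -/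
/-- A proper `k`-coloring: adjacent vertices receive distinct colors. -/
def IsProperColoring {V : Type*} (G : SimpleGraph V) {k : ℕ} (c : V → Fin k) : Prop :=
  ∀ u v : V, G.Adj u v → c u ≠ c v

/-- An equitable `k`-coloring: proper, and every color class has size `⌊n/k⌋` or `⌈n/k⌉`. -/
def IsEquitableColoring {V : Type*} [Fintype V] (G : SimpleGraph V) {k : ℕ}
    (c : V → Fin k) : Prop :=
  IsProperColoring G c ∧ ∀ i : Fin k,
    (Finset.univ.filter fun v => c v = i).card = Fintype.card V / k ∨
    (Finset.univ.filter fun v => c v = i).card = (Fintype.card V + k - 1) / k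

/-- `G` admits an equitable `k`-coloring. -/
def HasEquitableColoring {V : Type*} [Fintype V] (G : SimpleGraph V) (k : ℕ) : Prop :=
  ∃ c : V → Fin k, IsEquitableColoring G c

/-- The `(a,k)`-flower: `a+1` disjoint cliques of size `k-1` (vertex `some (i, x)` lies in
clique `i`) joined with a universal vertex `none`. -/
def flower (a k : ℕ) : SimpleGraph (Option (Fin (a + 1) × Fin (k - 1))) where
  Adj u v := u ≠ v ∧ ∀ p q, u = some p → v = some q → p.1 = q.1
  symm := ⟨fun _ _ h => ⟨h.1.symm, fun p q hp hq => (h.2 q p hq hp).symm⟩⟩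
  loopless := ⟨fun _ h => h.1 rfl⟩

/-- Disjoint union of an indexed family of graphs: vertices in different summands are
never adjacent, and within a summand adjacency is that of the summand. -/
def disjUnion {n : ℕ} {V : Fin n → Type*} (G : ∀ j, SimpleGraph (V j)) :
    SimpleGraph ((j : Fin n) × V j) where
  Adj u v := ∃ (j : Fin n) (x y : V j), u = ⟨j, x⟩ ∧ v = ⟨j, y⟩ ∧ (G j).Adj x y
  symm := by constructor; rintro u v ⟨j, x, y, rfl, rfl, h⟩; exact ⟨j, y, x, rfl, rfl, h.symm⟩
  loopless := by
    constructor
    rintro u ⟨j, x, y, rfl, h2, h⟩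
    obtain rfl : x = y := by simpa using h2
    exact (G j).loopless.irrefl x h

/-- The graph of Theorem 3 (block graphs): the disjoint union of the flowers
`F₀ = F(B, k+1)` (index `0`) and `F_j = F(a_j, k+1)` for `j ∈ {1,…,n}`, together with the
extra edges `y₀y_j` (`y_j` being the universal vertex `none` of the `j`-th flower). -/
def flowerGraph (n k B : ℕ) (a : Fin n → ℕ) :
    SimpleGraph ((j : Fin (n + 1)) × Option (Fin (Fin.cases B a j + 1) × Fin k)) :=
  disjUnion (fun j => flower (Fin.cases B a j) (k + 1)) ⊔
    SimpleGraph.fromRel fun u v => u.1 = 0 ∧ v.1 ≠ 0 ∧ u.2 = none ∧ v.2 = none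

/-!
In a proper `(k+1)`-coloring of the flower `F(a, k+1)`, each clique together with the universal
vertex `y` is a `(k+1)`-clique, so every color other than that of `y` occurs exactly once in each
clique: the color class of `y` meets the flower in one vertex, every other class in `a + 1`
vertices. The whole graph has `(k+1)(kB+n+1)` vertices, so an equitable coloring is one whose
classes all have exactly `kB+n+1` vertices. Since `y₀` is adjacent to every `y_j`, the class of
the color of `y₀` always has that size, and the class of any other color `i` has it iff the `a_j`
with `y_j` colored `i` sum to `B`. So the colors of `y₁, …, yₙ` are a packing into the `k` bins
given by the colors other than that of `y₀`; conversely, a packing prescribes these colors, and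
they extend clique by clique to a proper coloring.
-/

open Finset

theorem Finset.card_filter_eq_ite_of_injective {α β : Type*} [Fintype α] [Fintype β]
    [DecidableEq β] {f : α → β} (hf : Function.Injective f) {p : β} (hp : ∀ x, f x ≠ p)
    (hcard : Fintype.card β = Fintype.card α + 1) (i : β) :
    (univ.filter fun x => f x = i).card = if i = p then 0 else 1 := by
  split_ifs with hi
  · subst hi
    exact card_eq_zero.2 (filter_eq_empty_iff.2 fun x _ => hp x)
  · have himage : univ.image f = univ.erase p := by
      refine eq_of_subset_of_card_le (fun y hy => ?_) ?_
      · obtain ⟨x, -, rfl⟩ := mem_image.1 hy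
        exact mem_erase.2 ⟨hp x, mem_univ _⟩
      · rw [card_erase_of_mem (mem_univ p), card_image_of_injective _ hf, card_univ,
          card_univ, hcard, Nat.add_sub_cancel]
    obtain ⟨x, -, rfl⟩ := mem_image.1 (himage ▸ mem_erase.2 ⟨hi, mem_univ i⟩)
    exact card_eq_one.2 ⟨x, by ext y; simp [hf.eq_iff]⟩

theorem flower_card_colorClass {a k : ℕ} {c : Option (Fin (a + 1) × Fin k) → Fin (k + 1)}
    (hc : IsProperColoring (flower a (k + 1)) c) (i : Fin (k + 1)) :
    (univ.filter fun x => c x = i).card = if c none = i then 1 else a + 1 := by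
  have hclique (t : Fin (a + 1)) :
      (univ.filter fun x => c (some (t, x)) = i).card = if i = c none then 0 else 1 :=
    card_filter_eq_ite_of_injective
      (fun x y hxy => by_contra fun hne => hc _ _ ⟨by simpa using hne, by simp_all⟩ hxy)
      (fun x => hc _ _ ⟨by simp, by simp⟩) (by simp) i
  rw [card_filter, Fintype.sum_option, Fintype.sum_prod_type]
  simp only [← card_filter, hclique, sum_const, card_univ, Fintype.card_fin, smul_eq_mul]
  by_cases h : c none = i <;> simp [h, Ne.symm]

theorem isEquitableColoring_iff_card_colorClass_eq {V : Type*} [Fintype V] {G : SimpleGraph V}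
    {k m : ℕ} {c : V → Fin (k + 1)} (hV : Fintype.card V = (k + 1) * m) :
    IsEquitableColoring G c ↔
      IsProperColoring G c ∧ ∀ i, (univ.filter fun v => c v = i).card = m := by
  have hfloor : Fintype.card V / (k + 1) = m := by
    rw [hV, Nat.mul_div_cancel_left _ k.succ_pos]
  have hceil : (Fintype.card V + (k + 1) - 1) / (k + 1) = m := by
    rw [hV, show (k + 1) * m + (k + 1) - 1 = k + (k + 1) * m by omega,
      Nat.add_mul_div_left _ _ k.succ_pos, Nat.div_eq_of_lt k.lt_succ_self, zero_add]
  simp only [IsEquitableColoring, hfloor, hceil, or_self]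

theorem Finset.sum_ite_one_add_sum_filter {ι : Type*} (s : Finset ι) (p : ι → Prop)
    [DecidablePred p] (A : ι → ℕ) :
    ∑ j ∈ s, (if p j then 1 else A j + 1) + ∑ j ∈ s.filter p, A j = ∑ j ∈ s, (A j + 1) := by
  rw [sum_filter, ← sum_add_distrib]
  exact sum_congr rfl fun j _ => by split_ifs <;> omega

theorem Fin.forall_ne_sum_filter_succAbove_iff {n k : ℕ} {M : Type*} [AddCommMonoid M]
    (p : Fin (k + 1)) (σ : Fin n → Fin k) (a : Fin n → M) (b : M) :
    (∀ i ≠ p, ∑ j ∈ univ.filter (fun j => p.succAbove (σ j) = i), a j = b) ↔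
      ∀ i, ∑ j ∈ univ.filter (fun j => σ j = i), a j = b := by
  simp [Fin.forall_iff_succAbove p, Fin.succAbove_ne]

section flowerGraph

variable {n k B : ℕ} {a : Fin n → ℕ}

theorem flowerGraph_adj_centre (j : Fin n) :
    (flowerGraph n k B a).Adj ⟨0, none⟩ ⟨j.succ, none⟩ :=
  Or.inr ⟨fun h => Fin.succ_ne_zero j (congrArg Sigma.fst h).symm,
    Or.inl ⟨rfl, Fin.succ_ne_zero j, rfl, rfl⟩⟩

theorem card_flowerGraph_vertices (hsum : ∑ j, a j = k * B) :
    Fintype.card ((j : Fin (n + 1)) × Option (Fin (Fin.cases B a j + 1) × Fin k))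
      = (k + 1) * (k * B + n + 1) := by
  simp only [Fintype.card_sigma, Fintype.card_option, Fintype.card_prod, Fintype.card_fin,
    Fin.sum_univ_succ, Fin.cases_zero, Fin.cases_succ, sum_add_distrib, ← sum_mul, hsum,
    sum_const, card_univ, smul_eq_mul]
  ring

section coloring

variable {c : ((j : Fin (n + 1)) × Option (Fin (Fin.cases B a j + 1) × Fin k)) → Fin (k + 1)}

theorem IsProperColoring.flower_of_flowerGraph (hc : IsProperColoring (flowerGraph n k B a) c)
    (j : Fin (n + 1)) :
    IsProperColoring (flower (Fin.cases B a j) (k + 1)) fun x => c ⟨j, x⟩ :=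
  fun x y h => hc _ _ (Or.inl ⟨j, x, y, rfl, rfl, h⟩)

theorem flowerGraph_card_colorClass (hc : IsProperColoring (flowerGraph n k B a) c)
    (i : Fin (k + 1)) :
    (univ.filter fun v => c v = i).card = (if c ⟨0, none⟩ = i then 1 else B + 1) +
      ∑ j : Fin n, if c ⟨j.succ, none⟩ = i then 1 else a j + 1 := by
  rw [card_filter, ← univ_sigma_univ, sum_sigma, Fin.sum_univ_succ]
  simp only [← card_filter, flower_card_colorClass (hc.flower_of_flowerGraph _)]
  rfl

theorem IsProperColoring.flowerGraph_centre_ne (hc : IsProperColoring (flowerGraph n k B a) c)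
    (j : Fin n) : c ⟨j.succ, none⟩ ≠ c ⟨0, none⟩ :=
  fun h => hc _ _ (flowerGraph_adj_centre j) h.symm

theorem isEquitableColoring_flowerGraph_iff (hsum : ∑ j, a j = k * B) :
    IsEquitableColoring (flowerGraph n k B a) c ↔ IsProperColoring (flowerGraph n k B a) c ∧
      ∀ i ≠ c ⟨0, none⟩, ∑ j ∈ univ.filter (fun j => c ⟨j.succ, none⟩ = i), a j = B := by
  rw [isEquitableColoring_iff_card_colorClass_eq (card_flowerGraph_vertices hsum)]
  refine and_congr_right fun hc => forall_congr' fun i => ?_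
  have hsplit := sum_ite_one_add_sum_filter univ (fun j => c ⟨j.succ, none⟩ = i) a
  rw [sum_add_distrib, hsum, sum_const, card_univ, Fintype.card_fin, smul_eq_mul,
    mul_one] at hsplit
  rw [flowerGraph_card_colorClass hc]
  by_cases hi : c ⟨0, none⟩ = i
  · subst hi
    have hempty : ∑ j ∈ univ.filter (fun j => c ⟨j.succ, none⟩ = c ⟨0, none⟩), a j = 0 :=
      sum_eq_zero fun j hj => absurd (mem_filter.1 hj).2 (hc.flowerGraph_centre_ne j)
    rw [if_pos rfl]
    simp only [ne_eq, not_true_eq_false, false_imp_iff, iff_true]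
    omega
  · rw [if_neg hi]
    simp only [ne_eq, Ne.symm hi, not_false_eq_true, forall_const]
    omega

end coloring

def flowerGraphColoring (τ : Fin (n + 1) → Fin (k + 1)) :
    ((j : Fin (n + 1)) × Option (Fin (Fin.cases B a j + 1) × Fin k)) → Fin (k + 1)
  | ⟨j, none⟩ => τ j
  | ⟨j, some (_, x)⟩ => (τ j).succAbove x

theorem isProperColoring_flowerGraphColoring {τ : Fin (n + 1) → Fin (k + 1)}
    (hτ : ∀ j : Fin n, τ j.succ ≠ τ 0) :
    IsProperColoring (flowerGraph n k B a) (flowerGraphColoring τ) := by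
  rintro u v (⟨j, x, y, rfl, rfl, hxy, hclique⟩ | ⟨-, hcentre | hcentre⟩)
  · rcases x with _ | ⟨t, x⟩ <;> rcases y with _ | ⟨t', y⟩
    · exact absurd rfl hxy
    · exact Fin.ne_succAbove _ _
    · exact Fin.succAbove_ne _ _
    · obtain rfl : t = t' := hclique (t, x) (t', y) rfl rfl
      exact Fin.succAbove_right_injective.ne fun h => hxy (h ▸ rfl)
  all_goals
    obtain ⟨ju, xu⟩ := u
    obtain ⟨jv, xv⟩ := v
    dsimp only at hcentre
    obtain ⟨rfl, hj, rfl, rfl⟩ := hcentre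
    obtain ⟨j, rfl⟩ := Fin.exists_succ_eq.2 hj
  · exact (hτ j).symm
  · exact hτ j

end flowerGraph

theorem equitable_coloring_flowerGraph_iff_binpacking_general
    (n k B : ℕ) (a : Fin n → ℕ) (hsum : ∑ j, a j = k * B) :
    HasEquitableColoring (flowerGraph n k B a) (k + 1) ↔
      ∃ σ : Fin n → Fin k, ∀ i : Fin k,
        ∑ j ∈ Finset.univ.filter (fun j => σ j = i), a j = B := by
  constructor
  · rintro ⟨c, hc⟩
    obtain ⟨hproper, hbins⟩ := (isEquitableColoring_flowerGraph_iff hsum).1 hc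
    choose σ hσ using fun j => Fin.exists_succAbove_eq (hproper.flowerGraph_centre_ne j)
    refine ⟨σ, (Fin.forall_ne_sum_filter_succAbove_iff (c ⟨0, none⟩) σ a B).1 ?_⟩
    simpa only [hσ] using hbins
  · rintro ⟨σ, hσ⟩
    let τ : Fin (n + 1) → Fin (k + 1) := Fin.cons 0 (Fin.succAbove 0 ∘ σ)
    exact ⟨flowerGraphColoring τ, (isEquitableColoring_flowerGraph_iff hsum).2
      ⟨isProperColoring_flowerGraphColoring fun j => Fin.succAbove_ne 0 (σ j),
        (Fin.forall_ne_sum_filter_succAbove_iff 0 σ a B).2 hσ⟩⟩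

/-- The flower graph (disjoint flowers `F(B,k+1)`, `F(a_j,k+1)` with the universal vertex of
`F₀` joined to all other universal vertices) admits an equitable `(k+1)`-coloring iff the
items `a₁,…,aₙ` can be packed into `k` bins each summing exactly `B`. -/
theorem equitable_coloring_flowerGraph_iff_binpacking
    (n k B : ℕ) (a : Fin n → ℕ) (ha : ∀ j, 1 ≤ a j) (hk : 1 ≤ k) (hB : 1 ≤ B)
    (hsum : ∑ j, a j = k * B) :
    HasEquitableColoring (flowerGraph n k B a) (k + 1) ↔
      ∃ σ : Fin n → Fin k, ∀ i : Fin k,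
        ∑ j ∈ Finset.univ.filter (fun j => σ j = i), a j = B :=
  equitable_coloring_flowerGraph_iff_binpacking_general n k B a hsum
end

section
/- Let a₁,…,aₙ be positive integers and k ≥ 2, B ≥ 1 integers with a₁ + ⋯ + aₙ = kB. Let G be the disjoint union of the trems H(a₁,k), …, H(aₙ,k). Then G admits an equitable k-coloring if and only if there is a function σ : {1,…,n} → {1,…,k} such that for every i ∈ {1,…,k}, the sum of a_j over all j with σ(j) = i equals B. -/
/-- The `(a,k)`-trem: vertices `inl i` (`0`-indexed: `inl i` is `y_{i+1}`), together with
`2a` pairwise disjoint cliques of size `k-1`: `inr (i, false, x)` lies in `Q_{i+1}` and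
`inr (i, true, x)` lies in `Q_{i+1}'`. Each `y_{i+1}` is adjacent to every vertex of
`Q_{i+1}` and `Q_{i+1}'`, and additionally to every vertex of `Q_{i+2}` (when `i+2 ≤ a`). -/
def trem (a k : ℕ) : SimpleGraph (Fin a ⊕ Fin a × Bool × Fin (k - 1)) where
  Adj u v :=
    match u, v with
    | .inl _, .inl _ => False
    | .inl i, .inr (j, b, _) => j = i ∨ (b = false ∧ (j : ℕ) = (i : ℕ) + 1)
    | .inr (j, b, _), .inl i => j = i ∨ (b = false ∧ (j : ℕ) = (i : ℕ) + 1)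
    | .inr (i, b, x), .inr (j, c, y) => i = j ∧ b = c ∧ x ≠ y
  symm := by
    constructor
    rintro (i | ⟨j, b, x⟩) (i' | ⟨j', b', x'⟩) h
    · exact h
    · exact h
    · exact h
    · exact ⟨h.1.symm, h.2.1.symm, h.2.2.symm⟩
  loopless := by
    constructor
    rintro (i | ⟨j, b, x⟩) h
    · exact h
    · exact h.2.2 rfl

/-!
In a proper `k`-coloring of a trem, each `(k-1)`-clique misses exactly one color. Since `y_t`
and `y_{t+1}` both see all of `Q_{t+1}`, they both get the color it misses, so the `y`'s of the
`j`-th trem share one color `σ j`. Color `i` then occurs `a_j` times in the `j`-th trem if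
`σ j = i` and `2 a_j` times (once per clique) otherwise, so its class has `2kB - S_i` vertices,
where `S_i` is the load of bin `i` under `σ`. The graph has `(2k-1)kB` vertices, so the coloring
is equitable iff every class has `(2k-1)B` vertices, i.e. iff every `S_i = B`. Conversely, given
`σ`, color the `y`'s of the `j`-th trem by `σ j` and each clique bijectively by the other colors.
-/

open Finset Function

lemma mem_range_of_injective_of_forall_ne {α β : Type*} [Fintype α] [Fintype β]
    (hcard : Fintype.card β = Fintype.card α + 1) {g : α → β} (hg : Injective g) {s : β}
    (hs : ∀ x, g x ≠ s) {i : β} (hi : i ≠ s) : i ∈ Set.range g := by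
  classical
  have hcover : insert s (univ.image g) = univ := by
    refine eq_univ_of_card _ ?_
    rw [card_insert_of_notMem (by simpa using hs), card_image_of_injective _ hg, hcard, card_univ]
  have hmem : i ∈ insert s (univ.image g) := hcover ▸ mem_univ i
  simpa [hi] using hmem

lemma card_filter_eq_ite_of_injective {α β : Type*} [Fintype α] [Fintype β] [DecidableEq β]
    (hcard : Fintype.card β = Fintype.card α + 1) {g : α → β} (hg : Injective g) {s : β}
    (hs : ∀ x, g x ≠ s) (i : β) : #{x | g x = i} = if s = i then 0 else 1 := by
  split_ifs with h
  · subst h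
    simp [hs]
  · obtain ⟨x, rfl⟩ := mem_range_of_injective_of_forall_ne hcard hg hs (Ne.symm h)
    exact card_eq_one.2 ⟨x, by ext y; simp [hg.eq_iff]⟩

lemma isEquitableColoring_iff_of_card_eq_mul {V : Type*} [Fintype V] {G : SimpleGraph V}
    {k q : ℕ} (hk : 0 < k) (hV : Fintype.card V = k * q) {c : V → Fin k} :
    IsEquitableColoring G c ↔ IsProperColoring G c ∧ ∀ i, #{v | c v = i} = q := by
  have hfloor : Fintype.card V / k = q := by rw [hV, Nat.mul_div_cancel_left _ hk]
  have hceil : (Fintype.card V + k - 1) / k = q := by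
    rw [hV, Nat.add_sub_assoc hk, Nat.mul_add_div hk, Nat.div_eq_of_lt (by omega), add_zero]
  simp only [IsEquitableColoring, hfloor, hceil, or_self]

lemma isProperColoring_disjUnion_iff {n k : ℕ} {V : Fin n → Type*} {G : ∀ j, SimpleGraph (V j)}
    {c : (Σ j, V j) → Fin k} :
    IsProperColoring (disjUnion G) c ↔ ∀ j, IsProperColoring (G j) fun x => c ⟨j, x⟩ := by
  constructor
  · intro hc j x y h
    exact hc _ _ ⟨j, x, y, rfl, rfl, h⟩
  · rintro hc _ _ ⟨j, x, y, rfl, rfl, h⟩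
    exact hc j x y h

lemma card_filter_sigma_univ {ι : Type*} [Fintype ι] {V : ι → Type*} [∀ j, Fintype (V j)]
    (p : (Σ j, V j) → Prop) [DecidablePred p] : #{v | p v} = ∑ j, #{x | p ⟨j, x⟩} := by
  rw [← univ_sigma_univ, filter_sigma, card_sigma]

section Trem

-- The cliques of `trem a (m + 1)` are indexed by `Fin (m + 1 - 1)`, which is `Fin m` by `rfl`.
variable {a m : ℕ} {c : Fin a ⊕ Fin a × Bool × Fin m → Fin (m + 1)}

namespace IsProperColoring

lemma trem_clique_injective (hc : IsProperColoring (trem a (m + 1)) c) (q : Fin a) (b : Bool) :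
    Injective fun x => c (.inr (q, b, x)) := by
  intro x y hxy
  by_contra hne
  exact hc (.inr (q, b, x)) (.inr (q, b, y)) ⟨rfl, rfl, hne⟩ hxy

lemma trem_clique_ne_inl (hc : IsProperColoring (trem a (m + 1)) c) (q : Fin a) (b : Bool)
    (x : Fin m) : c (.inr (q, b, x)) ≠ c (.inl q) :=
  hc (.inr (q, b, x)) (.inl q) (Or.inl rfl)

lemma trem_inl_succ (hc : IsProperColoring (trem a (m + 1)) c) {t : ℕ} (ht : t + 1 < a) :
    c (.inl ⟨t + 1, ht⟩) = c (.inl ⟨t, by omega⟩) := by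
  by_contra hne
  obtain ⟨x, hx⟩ := mem_range_of_injective_of_forall_ne (by simp)
    (hc.trem_clique_injective ⟨t + 1, ht⟩ false) (hc.trem_clique_ne_inl _ false) (Ne.symm hne)
  exact hc (.inr (⟨t + 1, ht⟩, false, x)) (.inl ⟨t, _⟩) (Or.inr ⟨rfl, rfl⟩) hx

lemma exists_forall_trem_inl_eq (hc : IsProperColoring (trem a (m + 1)) c) :
    ∃ s, ∀ q, c (.inl q) = s := by
  rcases Nat.eq_zero_or_pos a with rfl | ha
  · exact ⟨0, fun q => q.elim0⟩
  refine ⟨c (.inl ⟨0, ha⟩), fun ⟨t, ht⟩ => ?_⟩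
  induction t with
  | zero => rfl
  | succ t ih => exact (hc.trem_inl_succ ht).trans (ih _)

lemma card_trem_color_add (hc : IsProperColoring (trem a (m + 1)) c) {s : Fin (m + 1)}
    (hs : ∀ q, c (.inl q) = s) (i : Fin (m + 1)) :
    #{v | c v = i} + (if s = i then a else 0) = 2 * a := by
  have hclique (q : Fin a) (b : Bool) : #{x | c (.inr (q, b, x)) = i} = if s = i then 0 else 1 :=
    card_filter_eq_ite_of_injective (by simp) (hc.trem_clique_injective q b)
      (fun x => hs q ▸ hc.trem_clique_ne_inl q b x) i
  simp only [card_filter] at hclique ⊢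
  rw [Fintype.sum_sum_type, Fintype.sum_prod_type]
  simp only [Fintype.sum_prod_type, Fintype.sum_bool, hclique, hs]
  split_ifs <;> simp [two_mul, mul_two]

end IsProperColoring

def tremColoring (s : Fin (m + 1)) : Fin a ⊕ Fin a × Bool × Fin m → Fin (m + 1)
  | .inl _ => s
  | .inr (_, _, x) => s.succAbove x

lemma isProperColoring_tremColoring (s : Fin (m + 1)) :
    IsProperColoring (trem a (m + 1)) (tremColoring s) := by
  rintro (q | ⟨q, b, x⟩) (q' | ⟨q', b', x'⟩) h
  · exact h.elim
  · exact (Fin.succAbove_ne s x').symm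
  · exact Fin.succAbove_ne s x
  · obtain ⟨rfl, rfl, hne⟩ := h
    exact fun h => hne (Fin.succAbove_right_injective h)

end Trem

lemma card_disjUnion_trem_color_add {n m : ℕ} {a : Fin n → ℕ}
    {c : (Σ j, Fin (a j) ⊕ Fin (a j) × Bool × Fin m) → Fin (m + 1)}
    (hc : ∀ j, IsProperColoring (trem (a j) (m + 1)) fun x => c ⟨j, x⟩) {σ : Fin n → Fin (m + 1)}
    (hσ : ∀ j q, c ⟨j, .inl q⟩ = σ j) (i : Fin (m + 1)) :
    #{v | c v = i} + ∑ j with σ j = i, a j = 2 * ∑ j, a j := by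
  rw [card_filter_sigma_univ, sum_filter, mul_sum, ← sum_add_distrib]
  exact sum_congr rfl fun j _ => (hc j).card_trem_color_add (hσ j) i

lemma card_disjUnion_trem_color_eq_iff {n m B : ℕ} {a : Fin n → ℕ}
    (hsum : ∑ j, a j = (m + 1) * B) {c : (Σ j, Fin (a j) ⊕ Fin (a j) × Bool × Fin m) → Fin (m + 1)}
    (hc : ∀ j, IsProperColoring (trem (a j) (m + 1)) fun x => c ⟨j, x⟩) {σ : Fin n → Fin (m + 1)}
    (hσ : ∀ j q, c ⟨j, .inl q⟩ = σ j) (i : Fin (m + 1)) :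
    #{v | c v = i} = (2 * m + 1) * B ↔ ∑ j with σ j = i, a j = B := by
  have hadd := card_disjUnion_trem_color_add hc hσ i
  have hsplit : 2 * ((m + 1) * B) = (2 * m + 1) * B + B := by ring
  rw [hsum, hsplit] at hadd
  omega

lemma card_disjUnion_trem_vertices {n : ℕ} (a : Fin n → ℕ) (m : ℕ) :
    Fintype.card (Σ j, Fin (a j) ⊕ Fin (a j) × Bool × Fin m) = (2 * m + 1) * ∑ j, a j := by
  simp only [Fintype.card_sigma, Fintype.card_sum, Fintype.card_prod, Fintype.card_fin,
    Fintype.card_bool, mul_sum]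
  exact sum_congr rfl fun j _ => by ring

theorem equitable_coloring_disjoint_trems_iff_binpacking_general
    (n k B : ℕ) (a : Fin n → ℕ) (hk : 2 ≤ k)
    (hsum : ∑ j, a j = k * B) :
    HasEquitableColoring (disjUnion fun j => trem (a j) k) k ↔
      ∃ σ : Fin n → Fin k, ∀ i : Fin k,
        ∑ j ∈ Finset.univ.filter (fun j => σ j = i), a j = B := by
  obtain ⟨m, rfl⟩ : ∃ m, k = m + 1 := ⟨k - 1, by omega⟩
  have hcard : Fintype.card (Σ j, Fin (a j) ⊕ Fin (a j) × Bool × Fin m)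
      = (m + 1) * ((2 * m + 1) * B) := by
    rw [card_disjUnion_trem_vertices, hsum]
    ring
  simp only [HasEquitableColoring, isEquitableColoring_iff_of_card_eq_mul m.succ_pos hcard,
    isProperColoring_disjUnion_iff]
  constructor
  · rintro ⟨c, hc, hclass⟩
    choose σ hσ using fun j => (hc j).exists_forall_trem_inl_eq
    exact ⟨σ, fun i => (card_disjUnion_trem_color_eq_iff hsum hc hσ i).1 (hclass i)⟩
  · rintro ⟨σ, hσ⟩
    have hc j : IsProperColoring (trem (a j) (m + 1)) (tremColoring (σ j)) :=
      isProperColoring_tremColoring _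
    refine ⟨fun v => tremColoring (σ v.1) v.2, hc, fun i => ?_⟩
    exact (card_disjUnion_trem_color_eq_iff hsum hc (fun _ _ => rfl) i).2 (hσ i)

/-- The disjoint union of the trems `H(a₁,k), …, H(aₙ,k)` admits an equitable `k`-coloring
iff the items `a₁,…,aₙ` can be packed into `k` bins each summing exactly `B`. -/
theorem equitable_coloring_disjoint_trems_iff_binpacking
    (n k B : ℕ) (a : Fin n → ℕ) (ha : ∀ j, 1 ≤ a j) (hk : 2 ≤ k) (hB : 1 ≤ B)
    (hsum : ∑ j, a j = k * B) :
    HasEquitableColoring (disjUnion fun j => trem (a j) k) k ↔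
      ∃ σ : Fin n → Fin k, ∀ i : Fin k,
        ∑ j ∈ Finset.univ.filter (fun j => σ j = i), a j = B :=
  equitable_coloring_disjoint_trems_iff_binpacking_general n k B a hk hsum
end
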